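/- arXiv:1102.5664 — 6 statements merged into one kernel-verified Lean document; each statement's English description precedes it below -/
import Mathlib

section
/- Let n ≥ 3 and let F_{n+1} be the free group with basis {a_0, a_1, …, a_n}. Let w be an element of the subgroup generated by a_1, …, a_{n−2}, and let p and q be distinct non-zero integers. Then the endomorphism T of F_{n+1} determined by a_{n−1} ↦ a_{n−1}w^p, a_n ↦ a_n w^q and a_i ↦ a_i for i ∉ {n−1, n} is an automorphism, and in Aut(F_{n+1}) the following relations hold: T∘R_w = R_w∘T, T∘R_{a_{n−1}}∘T^{−1} = R_{a_{n−1}}∘R_w^p, and T∘R_{a_n}∘T^{−1} = R_{a_n}∘R_w^q. (Consequently, the assignment α ↦ R_w, β ↦ R_{a_{n−1}}, γ ↦ R_{a_n}, t ↦ T defines a homomorphism to Aut(F_{n+1}) from the group G_{p,q} = ⟨α,β,γ,t ∣ [t,α], tβt^{−1} = βα^p, tγt^{−1} = γα^q⟩.) -/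
/-!
`T` is `a_i ↦ a_i w^{e i}` with `e` supported on `{n-1, n}`. Since `w` only involves generators
that `T` fixes, `T` fixes `w`, so the same map with `-e` inverts it. The automorphisms `R_w`,
`R_{a_{n-1}}`, `R_{a_n}` fix `w` and every `a_i` with `i ≠ 0`, so both sides of each relation agree
on those generators, and on `a_0` the relations reduce to `a_0 w = a_0 w` and
`a_0 a_{n-1} w^p = a_0 a_{n-1} w^p` (resp. with `a_n` and `q`).
-/

namespace MulAut

variable {G : Type*} [Group G]

theorem zpow_apply_eq_self {α : MulAut G} {x : G} (h : α x = x) (k : ℤ) : (α ^ k) x = x := by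
  have := (toPerm G α).zpow_apply_eq_self_of_apply_eq_self h k
  rwa [← map_zpow] at this

theorem zpow_apply_eq_mul_zpow {α : MulAut G} {a w : G} (ha : α a = a * w) (hw : α w = w)
    (k : ℤ) : (α ^ k) a = a * w ^ k := by
  induction k using Int.induction_on with
  | zero => simp
  | succ k ih =>
    rw [add_comm, zpow_one_add, mul_apply, ih, map_mul, ha, map_zpow, hw, mul_assoc,
      ← zpow_one_add, add_comm]
  | pred k ih =>
    apply α.injective
    rw [← mul_apply, ← zpow_one_add, add_sub_cancel, ih, map_mul, ha, map_zpow, hw, mul_assoc,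
      ← zpow_one_add, add_sub_cancel]

end MulAut

namespace FreeGroup

variable {ι : Type*}

theorem mulAut_ext {A B : MulAut (FreeGroup ι)} (h : ∀ i, A (of i) = B (of i)) : A = B :=
  MulEquiv.toMonoidHom_injective (ext_hom _ _ h)

theorem apply_eq_self_of_mem_closure {f : FreeGroup ι →* FreeGroup ι} {Z : Set ι}
    (hf : ∀ j ∈ Z, f (of j) = of j) {w : FreeGroup ι} (hw : w ∈ Subgroup.closure (of '' Z)) :
    f w = w :=
  MonoidHom.eqOn_closure (g := MonoidHom.id _) (by rintro _ ⟨j, hj, rfl⟩; exact hf j hj) hw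

def zpowMulGens (w : FreeGroup ι) (e : ι → ℤ) : FreeGroup ι →* FreeGroup ι :=
  lift fun i => of i * w ^ e i

@[simp]
theorem zpowMulGens_of (w : FreeGroup ι) (e : ι → ℤ) (i : ι) :
    zpowMulGens w e (of i) = of i * w ^ e i :=
  lift_apply_of

section

variable {w : FreeGroup ι} {e : ι → ℤ} {Z : Set ι}

theorem zpowMulGens_apply_self (hZ : ∀ j ∈ Z, e j = 0) (hw : w ∈ Subgroup.closure (of '' Z)) :
    zpowMulGens w e w = w :=
  apply_eq_self_of_mem_closure (fun j hj => by simp [hZ j hj]) hw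

theorem zpowMulGens_comp {e' : ι → ℤ} (hfix : zpowMulGens w e w = w) :
    (zpowMulGens w e).comp (zpowMulGens w e') = zpowMulGens w (e + e') :=
  ext_hom _ _ fun i => by simp [hfix, mul_assoc, zpow_add]

theorem zpowMulGens_zero : zpowMulGens w 0 = MonoidHom.id (FreeGroup ι) :=
  ext_hom _ _ fun i => by simp

theorem zpowMulGens_comp_neg (hZ : ∀ j ∈ Z, e j = 0) (hw : w ∈ Subgroup.closure (of '' Z)) :
    (zpowMulGens w e).comp (zpowMulGens w (-e)) = MonoidHom.id (FreeGroup ι) := by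
  rw [zpowMulGens_comp (zpowMulGens_apply_self hZ hw), add_neg_cancel, zpowMulGens_zero]

variable (w e)

def zpowMulGensEquiv (hZ : ∀ j ∈ Z, e j = 0) (hw : w ∈ Subgroup.closure (of '' Z)) :
    MulAut (FreeGroup ι) :=
  (zpowMulGens w e).toMulEquiv (zpowMulGens w (-e))
    (by simpa using zpowMulGens_comp_neg (e := -e) (by simpa using hZ) hw)
    (zpowMulGens_comp_neg hZ hw)

variable {w e}
variable (hZ : ∀ j ∈ Z, e j = 0) (hw : w ∈ Subgroup.closure (of '' Z))

@[simp]
theorem zpowMulGensEquiv_apply (x : FreeGroup ι) :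
    zpowMulGensEquiv w e hZ hw x = zpowMulGens w e x :=
  rfl

theorem zpowMulGensEquiv_mul_eq_mul {i₀ : ι} (he : e i₀ = 0) {A A' : MulAut (FreeGroup ι)}
    {x : FreeGroup ι} (hA : A (of i₀) = of i₀ * x) (hAi : ∀ i ≠ i₀, A (of i) = of i)
    (hA' : A' (of i₀) = of i₀ * zpowMulGens w e x) (hA'i : ∀ i ≠ i₀, A' (of i) = of i)
    (hA'w : A' w = w) :
    zpowMulGensEquiv w e hZ hw * A = A' * zpowMulGensEquiv w e hZ hw := by
  refine mulAut_ext fun i => ?_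
  simp only [MulAut.mul_apply, zpowMulGensEquiv_apply]
  by_cases hi : i = i₀
  · subst hi
    rw [hA, _root_.map_mul, zpowMulGens_of, he, zpow_zero, mul_one, hA']
  · rw [hAi i hi, zpowMulGens_of, _root_.map_mul, _root_.map_zpow, hA'i i hi, hA'w]

theorem zpowMulGensEquiv_commute {i₀ : ι} (he : e i₀ = 0) {S : MulAut (FreeGroup ι)}
    (hS : S (of i₀) = of i₀ * w) (hSi : ∀ i ≠ i₀, S (of i) = of i) (hSw : S w = w) :
    zpowMulGensEquiv w e hZ hw * S = S * zpowMulGensEquiv w e hZ hw :=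
  zpowMulGensEquiv_mul_eq_mul hZ hw he hS hSi (by rw [hS, zpowMulGens_apply_self hZ hw]) hSi hSw

theorem zpowMulGensEquiv_conj {i₀ c : ι} (he : e i₀ = 0) {R S : MulAut (FreeGroup ι)}
    (hR : R (of i₀) = of i₀ * of c) (hRi : ∀ i ≠ i₀, R (of i) = of i) (hRw : R w = w)
    (hS : S (of i₀) = of i₀ * w) (hSi : ∀ i ≠ i₀, S (of i) = of i) (hSw : S w = w) :
    zpowMulGensEquiv w e hZ hw * R * (zpowMulGensEquiv w e hZ hw)⁻¹ = R * S ^ e c := by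
  rw [mul_inv_eq_iff_eq_mul]
  refine zpowMulGensEquiv_mul_eq_mul hZ hw he hR hRi ?_ (fun i hi => ?_) ?_ <;>
    simp only [MulAut.mul_apply]
  · rw [MulAut.zpow_apply_eq_mul_zpow hS hSw, _root_.map_mul, hR, _root_.map_zpow, hRw,
      zpowMulGens_of, mul_assoc]
  · rw [MulAut.zpow_apply_eq_self (hSi i hi), hRi i hi]
  · rw [MulAut.zpow_apply_eq_self hSw, hRw]

end

end FreeGroup

/-- For `n ≥ 3`, the endomorphism `T` of the free group `F_{n+1}`
(with basis `a_0, …, a_n`) determined by `a_{n-1} ↦ a_{n-1} w^p`, `a_n ↦ a_n w^q`,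
`a_i ↦ a_i` otherwise, is an automorphism, and it satisfies the relations
`T R_w = R_w T`, `T R_{a_{n-1}} T⁻¹ = R_{a_{n-1}} R_w^p`, `T R_{a_n} T⁻¹ = R_{a_n} R_w^q`. -/
theorem stmt0 (n : ℕ) (hn : 3 ≤ n) (p q : ℤ)
    (w : FreeGroup (Fin (n + 1)))
    (hw : w ∈ Subgroup.closure
      {x : FreeGroup (Fin (n + 1)) |
        ∃ i : Fin (n + 1), 1 ≤ (i : ℕ) ∧ (i : ℕ) ≤ n - 2 ∧ x = FreeGroup.of i})
    (Rw Rb Rc : MulAut (FreeGroup (Fin (n + 1))))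
    (hRw0 : Rw (FreeGroup.of 0) = FreeGroup.of 0 * w)
    (hRw : ∀ i : Fin (n + 1), i ≠ 0 → Rw (FreeGroup.of i) = FreeGroup.of i)
    (hRb0 : Rb (FreeGroup.of 0) = FreeGroup.of 0 * FreeGroup.of (⟨n - 1, by omega⟩ : Fin (n + 1)))
    (hRb : ∀ i : Fin (n + 1), i ≠ 0 → Rb (FreeGroup.of i) = FreeGroup.of i)
    (hRc0 : Rc (FreeGroup.of 0) = FreeGroup.of 0 * FreeGroup.of (⟨n, by omega⟩ : Fin (n + 1)))
    (hRc : ∀ i : Fin (n + 1), i ≠ 0 → Rc (FreeGroup.of i) = FreeGroup.of i) :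
    ∃ T : MulAut (FreeGroup (Fin (n + 1))),
      T (FreeGroup.of (⟨n - 1, by omega⟩ : Fin (n + 1)))
        = FreeGroup.of (⟨n - 1, by omega⟩ : Fin (n + 1)) * w ^ p ∧
      T (FreeGroup.of (⟨n, by omega⟩ : Fin (n + 1)))
        = FreeGroup.of (⟨n, by omega⟩ : Fin (n + 1)) * w ^ q ∧
      (∀ i : Fin (n + 1), (i : ℕ) ≠ n - 1 → (i : ℕ) ≠ n →
        T (FreeGroup.of i) = FreeGroup.of i) ∧
      T * Rw = Rw * T ∧
      T * Rb * T⁻¹ = Rb * Rw ^ p ∧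
      T * Rc * T⁻¹ = Rc * Rw ^ q := by
  let e : Fin (n + 1) → ℤ := fun i => if (i : ℕ) = n - 1 then p else if (i : ℕ) = n then q else 0
  let Z : Set (Fin (n + 1)) := {i | 1 ≤ (i : ℕ) ∧ (i : ℕ) ≤ n - 2}
  have hwZ : w ∈ Subgroup.closure (FreeGroup.of '' Z) :=
    Subgroup.closure_mono (by rintro _ ⟨i, h1, h2, rfl⟩; exact ⟨i, ⟨h1, h2⟩, rfl⟩) hw
  have hZ : ∀ j ∈ Z, e j = 0 := fun j ⟨h1, h2⟩ => by simp only [e]; split_ifs <;> omega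
  have he0 : e 0 = 0 := by simp only [e, Fin.val_zero]; split_ifs <;> omega
  have hep : e ⟨n - 1, by omega⟩ = p := if_pos rfl
  have heq : e ⟨n, by omega⟩ = q := by simp only [e]; split_ifs <;> omega
  have hfix : ∀ A : MulAut (FreeGroup (Fin (n + 1))), (∀ i ≠ 0, A (.of i) = .of i) → A w = w :=
    fun A hA => FreeGroup.apply_eq_self_of_mem_closure (f := A.toMonoidHom)
      (fun j hj => hA j (by rintro rfl; simp [Z] at hj)) hwZ
  refine ⟨FreeGroup.zpowMulGensEquiv w e hZ hwZ, by simp [hep], by simp [heq],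
    fun i h1 h2 => by simp [e, h1, h2],
    FreeGroup.zpowMulGensEquiv_commute hZ hwZ he0 hRw0 hRw (hfix Rw hRw),
    hep ▸ FreeGroup.zpowMulGensEquiv_conj hZ hwZ he0 hRb0 hRb (hfix Rb hRb) hRw0 hRw (hfix Rw hRw),
    heq ▸ FreeGroup.zpowMulGensEquiv_conj hZ hwZ he0 hRc0 hRc (hfix Rc hRc) hRw0 hRw (hfix Rw hRw)⟩
end

section
/- Let F_3 be the free group with basis {a_1, a_2, a_3}. The four automorphisms λ_{21}, ρ_{21}, λ_{31}, ρ_{31} ∈ Aut(F_3) pairwise commute, and the subgroup Λ = ⟨λ_{21}, ρ_{21}, λ_{31}, ρ_{31}⟩ of Aut(F_3) is free abelian of rank 4: the homomorphism ℤ^4 → Aut(F_3) sending (k,l,m,n) to λ_{21}^k ρ_{21}^l λ_{31}^m ρ_{31}^n is injective. -/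
/-!
Automorphisms of a free group commute once they commute on a basis, which here is a direct check.
The product `λ₂₁^k ρ₂₁^l λ₃₁^m ρ₃₁^n` sends `a₂ ↦ a₁^k a₂ a₁^l` and `a₃ ↦ a₁^m a₃ a₁^n`, and a word `a₁^p a_j a₁^q` determines `(p, q)`: under `a₁ ↦ T`, `a_j ↦ S`
into `SL(2, ℤ)` it becomes `!![p, p * q - 1; 1, q]`.
-/

open ModularGroup MatrixGroups in
theorem ModularGroup.coe_T_zpow_mul_S_mul_T_zpow (p q : ℤ) :
    ↑(T ^ p * S * T ^ q) = !![p, p * q - 1; 1, q] := by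
  rw [Matrix.SpecialLinearGroup.coe_mul, Matrix.SpecialLinearGroup.coe_mul, coe_T_zpow, coe_S,
    coe_T_zpow, Matrix.mul_fin_two, Matrix.mul_fin_two]
  ring_nf

namespace FreeGroup

open ModularGroup MatrixGroups in
theorem of_zpow_mul_of_mul_of_zpow_injective {α : Type*} [DecidableEq α] {a b : α}
    (hba : b ≠ a) :
    Function.Injective fun pq : ℤ × ℤ => of a ^ pq.1 * of b * of a ^ pq.2 := by
  rintro ⟨p, q⟩ ⟨p', q'⟩ h
  have hSL : T ^ p * S * T ^ q = T ^ p' * S * T ^ q' := by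
    simpa [hba] using congrArg (FreeGroup.lift fun x => if x = a then T else S) h
  have hentries := congrArg (fun g : SL(2, ℤ) => (g 0 0, g 1 1)) hSL
  simp only [coe_T_zpow_mul_S_mul_T_zpow] at hentries
  simpa using hentries

end FreeGroup

namespace MulAut

variable {G : Type*} [Group G] {φ : MulAut G}

theorem zpow_apply_eq_self_s3 {a : G} (ha : φ a = a) (k : ℤ) : (φ ^ k) a = a := by
  have := Equiv.Perm.zpow_apply_eq_self_of_apply_eq_self (f := MulAut.toPerm G φ) ha k
  rwa [← map_zpow] at this

theorem zpow_apply_eq_zpow_mul_mul_zpow {b c d : G} (hc : φ c = c) (hd : φ d = d)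
    (hb : φ b = c * b * d) (k : ℤ) : (φ ^ k) b = c ^ k * b * d ^ k := by
  have hconj (m : ℤ) (x : G) : (φ ^ m) (c * x * d) = c * (φ ^ m) x * d := by
    rw [map_mul, map_mul, zpow_apply_eq_self_s3 hc, zpow_apply_eq_self_s3 hd]
  induction k using Int.induction_on with
  | zero => simp
  | succ n ih =>
    rw [zpow_add_one, mul_apply, hb, hconj, ih]
    group
  | pred n ih =>
    have hstep : (φ ^ (-(n : ℤ) - 1)) (φ b) = (φ ^ (-(n : ℤ))) b := by
      rw [← mul_apply, ← zpow_add_one, sub_add_cancel]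
    rw [hb, hconj, ih] at hstep
    calc (φ ^ (-(n : ℤ) - 1)) b
        = c⁻¹ * (c * (φ ^ (-(n : ℤ) - 1)) b * d) * d⁻¹ := by group
      _ = c ^ (-(n : ℤ) - 1) * b * d ^ (-(n : ℤ) - 1) := by rw [hstep]; group

theorem commute_of_forall_apply_of {α : Type*} {φ ψ : MulAut (FreeGroup α)}
    (h : ∀ x, φ (ψ (FreeGroup.of x)) = ψ (φ (FreeGroup.of x))) : Commute φ ψ :=
  MulEquiv.toMonoidHom_injective (FreeGroup.ext_hom _ _ h)

end MulAut

/-- In `Aut(F_3)` (basis `a_1 = of 0, a_2 = of 1, a_3 = of 2`), the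
Nielsen transformations `λ_{21}, ρ_{21}, λ_{31}, ρ_{31}` pairwise commute, and they
generate a free abelian group of rank 4: `(k,l,m,n) ↦ λ_{21}^k ρ_{21}^l λ_{31}^m ρ_{31}^n`
is injective on `ℤ⁴`. -/
theorem stmt3 (lam21 rho21 lam31 rho31 : MulAut (FreeGroup (Fin 3)))
    (hl1 : lam21 (FreeGroup.of 1) = FreeGroup.of 0 * FreeGroup.of 1)
    (hl2 : lam21 (FreeGroup.of 0) = FreeGroup.of 0)
    (hl3 : lam21 (FreeGroup.of 2) = FreeGroup.of 2)
    (hr1 : rho21 (FreeGroup.of 1) = FreeGroup.of 1 * FreeGroup.of 0)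
    (hr2 : rho21 (FreeGroup.of 0) = FreeGroup.of 0)
    (hr3 : rho21 (FreeGroup.of 2) = FreeGroup.of 2)
    (hl1' : lam31 (FreeGroup.of 2) = FreeGroup.of 0 * FreeGroup.of 2)
    (hl2' : lam31 (FreeGroup.of 0) = FreeGroup.of 0)
    (hl3' : lam31 (FreeGroup.of 1) = FreeGroup.of 1)
    (hr1' : rho31 (FreeGroup.of 2) = FreeGroup.of 2 * FreeGroup.of 0)
    (hr2' : rho31 (FreeGroup.of 0) = FreeGroup.of 0)
    (hr3' : rho31 (FreeGroup.of 1) = FreeGroup.of 1) :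
    (Commute lam21 rho21 ∧ Commute lam21 lam31 ∧ Commute lam21 rho31 ∧
      Commute rho21 lam31 ∧ Commute rho21 rho31 ∧ Commute lam31 rho31) ∧
    Function.Injective (fun v : ℤ × ℤ × ℤ × ℤ =>
      lam21 ^ v.1 * rho21 ^ v.2.1 * lam31 ^ v.2.2.1 * rho31 ^ v.2.2.2) := by
  open FreeGroup MulAut in
  refine ⟨?_, ?_⟩
  · refine ⟨?_, ?_, ?_, ?_, ?_, ?_⟩ <;> refine commute_of_forall_apply_of fun i => ?_ <;>
      fin_cases i <;> simp [*, mul_assoc]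
  · have hlam21 := zpow_apply_eq_zpow_mul_mul_zpow hl2 (map_one _) (by rw [hl1, mul_one])
    have hrho21 := zpow_apply_eq_zpow_mul_mul_zpow (map_one _) hr2 (by rw [hr1, one_mul])
    have hlam31 := zpow_apply_eq_zpow_mul_mul_zpow hl2' (map_one _) (by rw [hl1', mul_one])
    have hrho31 := zpow_apply_eq_zpow_mul_mul_zpow (map_one _) hr2' (by rw [hr1', one_mul])
    have heval1 (k l m n : ℤ) :
        (lam21 ^ k * rho21 ^ l * lam31 ^ m * rho31 ^ n) (of 1) = of 0 ^ k * of 1 * of 0 ^ l := by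
      simp [hlam21, hrho21, zpow_apply_eq_self_s3, hl2, hl3', hr3']
    have heval2 (k l m n : ℤ) :
        (lam21 ^ k * rho21 ^ l * lam31 ^ m * rho31 ^ n) (of 2) = of 0 ^ m * of 2 * of 0 ^ n := by
      simp [hlam31, hrho31, zpow_apply_eq_self_s3, hl2, hl3, hr2, hr3, hl2']
    rintro ⟨k, l, m, n⟩ ⟨k', l', m', n'⟩ h
    have h1 := congrArg (· (of 1)) h
    have h2 := congrArg (· (of 2)) h
    simp only [heval1, heval2] at h1 h2
    obtain ⟨rfl, rfl⟩ := Prod.ext_iff.mp <|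
      of_zpow_mul_of_mul_of_zpow_injective (by decide) (a₁ := (k, l)) (a₂ := (k', l')) h1
    obtain ⟨rfl, rfl⟩ := Prod.ext_iff.mp <|
      of_zpow_mul_of_mul_of_zpow_injective (by decide) (a₁ := (m, n)) (a₂ := (m', n')) h2
    rfl
end

section
/- Let F_3 be the free group with basis {a_1, a_2, a_3}. In Γ = Aut(F_3), the element λ_{21} lies in the commutator subgroup of the centralizer Z_Γ(ρ_{21}) of ρ_{21}, and the element ρ_{21} lies in the commutator subgroup of the centralizer Z_Γ(λ_{21}) of λ_{21}. -/
/-!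
For a third index `k`, the Nielsen transformations satisfy `λ_{ij} = [ρ_{kj}, λ_{ik}]` and
`ρ_{ij} = [λ_{kj}, ρ_{ik}]`. Both factors of the first commutator commute with `ρ_{ij}`:
`ρ_{kj}` multiplies another generator by the same `a_j` on the right, and `λ_{ik}` multiplies
`a_i` on the other side. Symmetrically, both factors of the second commute with `λ_{ij}`.
-/

open scoped commutatorElement

namespace FreeGroup

variable {α : Type*}

lemma mulAut_ext_s6 {φ ψ : MulAut (FreeGroup α)} (h : ∀ a, φ (of a) = ψ (of a)) : φ = ψ :=
  MulEquiv.toMonoidHom_injective (ext_hom _ _ h)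

variable [DecidableEq α] {i j k m : α}

def leftNielsen (i j : α) (hij : i ≠ j) : MulAut (FreeGroup α) :=
  MonoidHom.toMulEquiv (lift (Function.update of i (of j * of i)))
    (lift (Function.update of i ((of j)⁻¹ * of i)))
    (ext_hom _ _ fun m => by
      rcases eq_or_ne m i with rfl | hm <;> simp [Function.update_of_ne, hij.symm, *])
    (ext_hom _ _ fun m => by
      rcases eq_or_ne m i with rfl | hm <;> simp [Function.update_of_ne, hij.symm, *])

def rightNielsen (i j : α) (hij : i ≠ j) : MulAut (FreeGroup α) :=
  MonoidHom.toMulEquiv (lift (Function.update of i (of i * of j)))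
    (lift (Function.update of i (of i * (of j)⁻¹)))
    (ext_hom _ _ fun m => by
      rcases eq_or_ne m i with rfl | hm <;> simp [Function.update_of_ne, hij.symm, *])
    (ext_hom _ _ fun m => by
      rcases eq_or_ne m i with rfl | hm <;> simp [Function.update_of_ne, hij.symm, *])

section Apply

variable (hij : i ≠ j)

@[simp] lemma leftNielsen_of_self : leftNielsen i j hij (of i) = of j * of i := by
  simp [leftNielsen]

@[simp] lemma leftNielsen_of_of_ne (hm : m ≠ i) : leftNielsen i j hij (of m) = of m := by
  simp [leftNielsen, hm]

@[simp] lemma leftNielsen_symm_of_self :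
    (leftNielsen i j hij).symm (of i) = (of j)⁻¹ * of i := by
  simp [leftNielsen]

@[simp] lemma leftNielsen_symm_of_of_ne (hm : m ≠ i) :
    (leftNielsen i j hij).symm (of m) = of m := by
  simp [leftNielsen, hm]

@[simp] lemma rightNielsen_of_self : rightNielsen i j hij (of i) = of i * of j := by
  simp [rightNielsen]

@[simp] lemma rightNielsen_of_of_ne (hm : m ≠ i) : rightNielsen i j hij (of m) = of m := by
  simp [rightNielsen, hm]

@[simp] lemma rightNielsen_symm_of_self :
    (rightNielsen i j hij).symm (of i) = of i * (of j)⁻¹ := by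
  simp [rightNielsen]

@[simp] lemma rightNielsen_symm_of_of_ne (hm : m ≠ i) :
    (rightNielsen i j hij).symm (of m) = of m := by
  simp [rightNielsen, hm]

end Apply

lemma commute_leftNielsen_rightNielsen (hij : i ≠ j) (hik : i ≠ k) :
    Commute (leftNielsen i j hij) (rightNielsen i k hik) :=
  mulAut_ext_s6 fun m => by
    rcases eq_or_ne m i with rfl | hm <;>
      simp [MulAut.mul_apply, hij.symm, hik.symm, mul_assoc, *]

lemma commute_leftNielsen_leftNielsen (hij : i ≠ j) (hkj : k ≠ j) (hik : i ≠ k) :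
    Commute (leftNielsen i j hij) (leftNielsen k j hkj) :=
  mulAut_ext_s6 fun m => by
    rcases eq_or_ne m i with rfl | hmi
    · simp [MulAut.mul_apply, hik, hkj.symm]
    rcases eq_or_ne m k with rfl | hmk
    · simp [MulAut.mul_apply, hij.symm, hik.symm]
    simp [MulAut.mul_apply, hmi, hmk]

lemma commute_rightNielsen_rightNielsen (hij : i ≠ j) (hkj : k ≠ j) (hik : i ≠ k) :
    Commute (rightNielsen i j hij) (rightNielsen k j hkj) :=
  mulAut_ext_s6 fun m => by
    rcases eq_or_ne m i with rfl | hmi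
    · simp [MulAut.mul_apply, hik, hkj.symm]
    rcases eq_or_ne m k with rfl | hmk
    · simp [MulAut.mul_apply, hij.symm, hik.symm]
    simp [MulAut.mul_apply, hmi, hmk]

lemma leftNielsen_eq_commutator (hij : i ≠ j) (hkj : k ≠ j) (hik : i ≠ k) :
    leftNielsen i j hij = ⁅rightNielsen k j hkj, leftNielsen i k hik⁆ :=
  mulAut_ext_s6 fun m => by
    simp only [commutatorElement_def, MulAut.mul_apply, MulAut.inv_apply]
    rcases eq_or_ne m i with rfl | hmi
    · simp [hij.symm, hik, hik.symm, hkj.symm, mul_assoc]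
    rcases eq_or_ne m k with rfl | hmk
    · simp [hij.symm, hik.symm, hkj.symm, mul_assoc]
    simp [hmi, hmk]

lemma rightNielsen_eq_commutator (hij : i ≠ j) (hkj : k ≠ j) (hik : i ≠ k) :
    rightNielsen i j hij = ⁅leftNielsen k j hkj, rightNielsen i k hik⁆ :=
  mulAut_ext_s6 fun m => by
    simp only [commutatorElement_def, MulAut.mul_apply, MulAut.inv_apply]
    rcases eq_or_ne m i with rfl | hmi
    · simp [hij.symm, hik, hik.symm, hkj.symm, mul_assoc]
    rcases eq_or_ne m k with rfl | hmk
    · simp [hij.symm, hik.symm, hkj.symm]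
    simp [hmi, hmk]

lemma leftNielsen_mem_commutator_centralizer_rightNielsen (hij : i ≠ j) (hkj : k ≠ j)
    (hik : i ≠ k) :
    leftNielsen i j hij ∈
      ⁅Subgroup.centralizer {rightNielsen i j hij},
        Subgroup.centralizer {rightNielsen i j hij}⁆ := by
  rw [leftNielsen_eq_commutator hij hkj hik]
  refine Subgroup.commutator_mem_commutator ?_ ?_ <;> rw [Subgroup.mem_centralizer_singleton_iff]
  exacts [commute_rightNielsen_rightNielsen hkj hij hik.symm,
    commute_leftNielsen_rightNielsen hik hij]

lemma rightNielsen_mem_commutator_centralizer_leftNielsen (hij : i ≠ j) (hkj : k ≠ j)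
    (hik : i ≠ k) :
    rightNielsen i j hij ∈
      ⁅Subgroup.centralizer {leftNielsen i j hij},
        Subgroup.centralizer {leftNielsen i j hij}⁆ := by
  rw [rightNielsen_eq_commutator hij hkj hik]
  refine Subgroup.commutator_mem_commutator ?_ ?_ <;> rw [Subgroup.mem_centralizer_singleton_iff]
  exacts [commute_leftNielsen_leftNielsen hkj hij hik.symm,
    (commute_leftNielsen_rightNielsen hij hik).symm]

end FreeGroup

open FreeGroup in
/-- In `Γ = Aut(F_3)` (basis `a_1 = of 0, a_2 = of 1, a_3 = of 2`),
`λ_{21}` lies in the commutator subgroup of the centralizer of `ρ_{21}`, and `ρ_{21}`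
lies in the commutator subgroup of the centralizer of `λ_{21}`. -/
theorem stmt6 (lam21 rho21 : MulAut (FreeGroup (Fin 3)))
    (hl1 : lam21 (FreeGroup.of 1) = FreeGroup.of 0 * FreeGroup.of 1)
    (hl2 : lam21 (FreeGroup.of 0) = FreeGroup.of 0)
    (hl3 : lam21 (FreeGroup.of 2) = FreeGroup.of 2)
    (hr1 : rho21 (FreeGroup.of 1) = FreeGroup.of 1 * FreeGroup.of 0)
    (hr2 : rho21 (FreeGroup.of 0) = FreeGroup.of 0)
    (hr3 : rho21 (FreeGroup.of 2) = FreeGroup.of 2) :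
    lam21 ∈ ⁅Subgroup.centralizer {rho21}, Subgroup.centralizer {rho21}⁆ ∧
    rho21 ∈ ⁅Subgroup.centralizer {lam21}, Subgroup.centralizer {lam21}⁆ := by
  have hlam : lam21 = leftNielsen 1 0 (by decide) :=
    mulAut_ext_s6 fun m => by fin_cases m <;> simp [hl1, hl2, hl3]
  have hrho : rho21 = rightNielsen 1 0 (by decide) :=
    mulAut_ext_s6 fun m => by fin_cases m <;> simp [hr1, hr2, hr3]
  subst hlam hrho
  exact ⟨leftNielsen_mem_commutator_centralizer_rightNielsen _ (k := 2) (by decide) (by decide),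
    rightNielsen_mem_commutator_centralizer_leftNielsen _ (k := 2) (by decide) (by decide)⟩
end

section
/- Let n ≥ 6 and d ≥ 1, let F_n be the free group with basis {a_1, …, a_n}, and let λ ∈ Aut(F_n) be a Nielsen transformation λ_{ij} (i ≠ j). Then for every group homomorphism Φ : Aut(F_n) → SL(d, ℝ), every complex eigenvalue of the matrix Φ(λ) (regarded as a d×d complex matrix) has absolute value 1. -/
/-!
If `g` is a product of commutators of elements commuting with `g`, then in any finite-dimensional
representation `ρ` those elements preserve each eigenspace `E` of `ρ g`, and the determinant of
their action on `E` is multiplicative with commutative values; hence `det (ρ g ∣ E) = 1`. Since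
`ρ g` acts on `E` as `μ`, this gives `μ ^ dim E = 1`, so `μ` is a root of unity.

Given two further indices `k, l` distinct from `i, j`, the Nielsen transformation `λ_ij` is
such a product of three commutators: `λ_ij = ⁅λ_kj, β⁆ * ⁅λ_lj, R_kl⁆ * ⁅λ_kl, R_lj⁆`, where
`R_st : a_s ↦ a_s a_t` and `β : a_i ↦ a_k a_i, a_j ↦ a_k a_j a_k⁻¹`. The first commutator is
`λ_ij` composed with conjugation of `a_k` by `a_j`, which the other two undo, as
`⁅λ_lj, R_kl⁆ = R_kj` and `⁅λ_kl, R_lj⁆ = λ_kj⁻¹`.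
-/

open Module Module.End
open scoped commutatorElement

namespace MonoidHom

variable {G K V : Type*} [Group G] [Field K] [AddCommGroup V] [Module K V]

lemma mapsTo_eigenspace_of_mem_centralizer (ρ : G →* End K V) {g h : G}
    (hh : h ∈ Subgroup.centralizer {g}) (μ : K) :
    Set.MapsTo (ρ h) (eigenspace (ρ g) μ) (eigenspace (ρ g) μ) :=
  mapsTo_genEigenspace_of_comm
    ((show Commute h g from Subgroup.mem_centralizer_singleton_iff.mp hh).map ρ).symm μ 1

noncomputable def eigenspaceDet (ρ : G →* End K V) (g : G) (μ : K) :
    Subgroup.centralizer {g} →* K where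
  toFun h := LinearMap.det ((ρ h).restrict (ρ.mapsTo_eigenspace_of_mem_centralizer h.2 μ))
  map_one' := by
    convert LinearMap.det_id
    ext
    simp
  map_mul' x y := by
    simp only [Subgroup.coe_mul, map_mul]
    exact map_mul LinearMap.det (LinearMap.restrict _ _) (LinearMap.restrict _ _)

lemma eigenspaceDet_self [FiniteDimensional K V] (ρ : G →* End K V) (g : G) (μ : K) :
    ρ.eigenspaceDet g μ ⟨g, Subgroup.mem_centralizer_singleton_iff.mpr rfl⟩ =
      μ ^ finrank K (eigenspace (ρ g) μ) := by
  simp only [eigenspaceDet, MonoidHom.coe_mk, OneHom.coe_mk]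
  rw [restrict_eigenspace, LinearMap.det_smul, LinearMap.det_id, mul_one]

theorem pow_finrank_eigenspace_eq_one [FiniteDimensional K V] (ρ : G →* End K V) {g : G}
    (hg : g ∈ ⁅Subgroup.centralizer {g}, Subgroup.centralizer {g}⁆) (μ : K) :
    μ ^ finrank K (eigenspace (ρ g) μ) = 1 := by
  rw [← (Subgroup.centralizer {g}).map_subtype_commutator] at hg
  obtain ⟨h, hh, hhg⟩ := hg
  obtain rfl : h = ⟨g, Subgroup.mem_centralizer_singleton_iff.mpr rfl⟩ := Subtype.ext hhg
  rw [← eigenspaceDet_self]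
  exact congrArg Units.val
    (Abelianization.commutator_subset_ker (ρ.eigenspaceDet g μ).toHomUnits hh)

theorem exists_pow_eq_one_of_mem_spectrum {n : Type*} [Fintype n] [DecidableEq n]
    (ρ : G →* Matrix n n K) {g : G}
    (hg : g ∈ ⁅Subgroup.centralizer {g}, Subgroup.centralizer {g}⁆) {μ : K}
    (hμ : μ ∈ spectrum K (ρ g)) : ∃ m ≠ 0, μ ^ m = 1 := by
  let ρ' : G →* End K (n → K) := Matrix.toLinAlgEquiv'.toMonoidHom.comp ρ
  have hμ' : (ρ' g).HasEigenvalue μ :=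
    hasEigenvalue_iff_mem_spectrum.mpr (Matrix.spectrum_toLin' (ρ g) ▸ hμ)
  exact ⟨_, Submodule.finrank_eq_zero.not.mpr hμ', ρ'.pow_finrank_eigenspace_eq_one hg μ⟩

end MonoidHom

namespace FreeGroup

variable {α : Type*}

lemma mulEquiv_ext {M : Type*} [Monoid M] {e f : FreeGroup α ≃* M}
    (h : ∀ a, e (of a) = f (of a)) : e = f :=
  MulEquiv.toMonoidHom_injective (ext_hom _ _ h)

def mulEquivOfGenerators (φ ψ : α → FreeGroup α) (hψφ : ∀ a, lift ψ (φ a) = of a)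
    (hφψ : ∀ a, lift φ (ψ a) = of a) : FreeGroup α ≃* FreeGroup α :=
  (lift φ).toMulEquiv (lift ψ) (ext_hom _ _ (by simpa using hψφ))
    (ext_hom _ _ (by simpa using hφψ))

@[simp] lemma mulEquivOfGenerators_apply_of (φ ψ : α → FreeGroup α) (hψφ hφψ) (a : α) :
    mulEquivOfGenerators φ ψ hψφ hφψ (of a) = φ a := by
  simp [mulEquivOfGenerators]

@[simp] lemma mulEquivOfGenerators_symm_apply_of (φ ψ : α → FreeGroup α) (hψφ hφψ) (a : α) :
    (mulEquivOfGenerators φ ψ hψφ hφψ).symm (of a) = ψ a := by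
  simp [mulEquivOfGenerators]

variable [DecidableEq α]

def nielsenLeft (s t : α) (h : s ≠ t) : MulAut (FreeGroup α) :=
  mulEquivOfGenerators (fun r => if r = s then of t * of s else of r)
    (fun r => if r = s then (of t)⁻¹ * of s else of r)
    (fun r => by by_cases hr : r = s <;> simp [hr, h.symm])
    (fun r => by by_cases hr : r = s <;> simp [hr, h.symm])

def nielsenRight (s t : α) (h : s ≠ t) : MulAut (FreeGroup α) :=
  mulEquivOfGenerators (fun r => if r = s then of s * of t else of r)
    (fun r => if r = s then of s * (of t)⁻¹ else of r)
    (fun r => by by_cases hr : r = s <;> simp [hr, h.symm])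
    (fun r => by by_cases hr : r = s <;> simp [hr, h.symm])

def nielsenLeftConj (i j k : α) (hij : i ≠ j) (hik : i ≠ k) (hjk : j ≠ k) :
    MulAut (FreeGroup α) :=
  mulEquivOfGenerators
    (fun r => if r = i then of k * of i else if r = j then of k * of j * (of k)⁻¹ else of r)
    (fun r => if r = i then (of k)⁻¹ * of i else if r = j then (of k)⁻¹ * of j * of k else of r)
    (fun r => by
      by_cases hri : r = i
      · simp [hri, hik.symm, hjk.symm]
      · by_cases hrj : r = j <;> simp [hri, hrj, hik.symm, hjk.symm, hij.symm, mul_assoc])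
    (fun r => by
      by_cases hri : r = i
      · simp [hri, hik.symm, hjk.symm]
      · by_cases hrj : r = j <;> simp [hri, hrj, hik.symm, hjk.symm, hij.symm, mul_assoc])

@[simp] lemma nielsenLeft_apply_of (s t : α) (h : s ≠ t) (r : α) :
    nielsenLeft s t h (of r) = if r = s then of t * of s else of r := by
  simp [nielsenLeft]

@[simp] lemma nielsenLeft_symm_apply_of (s t : α) (h : s ≠ t) (r : α) :
    (nielsenLeft s t h).symm (of r) = if r = s then (of t)⁻¹ * of s else of r := by
  simp [nielsenLeft]

@[simp] lemma nielsenRight_apply_of (s t : α) (h : s ≠ t) (r : α) :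
    nielsenRight s t h (of r) = if r = s then of s * of t else of r := by
  simp [nielsenRight]

@[simp] lemma nielsenRight_symm_apply_of (s t : α) (h : s ≠ t) (r : α) :
    (nielsenRight s t h).symm (of r) = if r = s then of s * (of t)⁻¹ else of r := by
  simp [nielsenRight]

@[simp] lemma nielsenLeftConj_apply_of (i j k : α) (hij hik hjk) (r : α) :
    nielsenLeftConj i j k hij hik hjk (of r) =
      if r = i then of k * of i else if r = j then of k * of j * (of k)⁻¹ else of r := by
  simp [nielsenLeftConj]

@[simp] lemma nielsenLeftConj_symm_apply_of (i j k : α) (hij hik hjk) (r : α) :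
    (nielsenLeftConj i j k hij hik hjk).symm (of r) =
      if r = i then (of k)⁻¹ * of i else if r = j then (of k)⁻¹ * of j * of k else of r := by
  simp [nielsenLeftConj]

lemma nielsenLeft_commute_nielsenLeft {s t s' t' : α} (h : s ≠ t) (h' : s' ≠ t')
    (hss' : s ≠ s') (ht's : t' ≠ s) (hts' : t ≠ s') :
    Commute (nielsenLeft s t h) (nielsenLeft s' t' h') := by
  refine mulEquiv_ext fun r => ?_
  by_cases hr : r = s ∨ r = s'
  · rcases hr with hr | hr <;> simp [hr, hss', hss'.symm, ht's, hts']
  · simp [not_or.mp hr]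

lemma nielsenRight_commute_nielsenLeft {s t s' t' : α} (h : s ≠ t) (h' : s' ≠ t')
    (hss' : s ≠ s') (ht's : t' ≠ s) (hts' : t ≠ s') :
    Commute (nielsenRight s t h) (nielsenLeft s' t' h') := by
  refine mulEquiv_ext fun r => ?_
  by_cases hr : r = s ∨ r = s'
  · rcases hr with hr | hr <;> simp [hr, hss', hss'.symm, ht's, hts']
  · simp [not_or.mp hr]

section FourIndices

variable {i j k l : α} (hij : i ≠ j) (hik : i ≠ k) (hil : i ≠ l) (hjk : j ≠ k) (hjl : j ≠ l)
  (hkl : k ≠ l)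

lemma nielsenLeftConj_commute_nielsenLeft :
    Commute (nielsenLeftConj i j k hij hik hjk) (nielsenLeft i j hij) := by
  refine mulEquiv_ext fun r => ?_
  by_cases hr : r = i ∨ r = j
  · rcases hr with hr | hr <;> simp [hr, hij.symm, hik.symm, mul_assoc]
  · simp [not_or.mp hr]

include hil in
lemma nielsenLeft_eq_commutator_mul_commutator_mul_commutator :
    nielsenLeft i j hij =
      ⁅nielsenLeft k j hjk.symm, nielsenLeftConj i j k hij hik hjk⁆ *
        ⁅nielsenLeft l j hjl.symm, nielsenRight k l hkl⁆ *
        ⁅nielsenLeft k l hkl, nielsenRight l j hjl.symm⁆ := by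
  refine mulEquiv_ext fun r => ?_
  by_cases hr : r = i ∨ r = j ∨ r = k ∨ r = l
  · rcases hr with hr | hr | hr | hr <;>
      simp [hr, hik, hil, hjk, hjl, hkl, hij.symm, hik.symm, hil.symm, hjk.symm, hjl.symm,
        hkl.symm, commutatorElement_def, mul_assoc]
  · push Not at hr
    simp [hr, commutatorElement_def]

include hik hil hjk hjl hkl in
theorem nielsenLeft_mem_commutator_centralizer :
    nielsenLeft i j hij ∈ ⁅Subgroup.centralizer {nielsenLeft i j hij},
      Subgroup.centralizer {nielsenLeft i j hij}⁆ := by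
  set C := Subgroup.centralizer {nielsenLeft i j hij}
  have mem_centralizer {x} (hx : Commute x (nielsenLeft i j hij)) : x ∈ C :=
    Subgroup.mem_centralizer_singleton_iff.mpr hx.eq
  nth_rewrite 1 [nielsenLeft_eq_commutator_mul_commutator_mul_commutator hij hik hil hjk hjl hkl]
  refine ⁅C, C⁆.mul_mem (⁅C, C⁆.mul_mem ?_ ?_) ?_ <;>
    refine Subgroup.commutator_mem_commutator (mem_centralizer ?_) (mem_centralizer ?_)
  · exact nielsenLeft_commute_nielsenLeft _ _ hik.symm hjk hij.symm
  · exact nielsenLeftConj_commute_nielsenLeft hij hik hjk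
  · exact nielsenLeft_commute_nielsenLeft _ _ hil.symm hjl hij.symm
  · exact nielsenRight_commute_nielsenLeft _ _ hik.symm hjk hil.symm
  · exact nielsenLeft_commute_nielsenLeft _ _ hik.symm hjk hil.symm
  · exact nielsenRight_commute_nielsenLeft _ _ hil.symm hjl hij.symm

end FourIndices

end FreeGroup

lemma Fintype.exists_two_ne_of_four_le_card {α : Type*} [Fintype α] (hα : 4 ≤ Fintype.card α)
    (i j : α) : ∃ k l : α, i ≠ k ∧ i ≠ l ∧ j ≠ k ∧ j ≠ l ∧ k ≠ l := by
  classical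
  have hcard : 1 < ({i, j}ᶜ : Finset α).card := by
    have := Finset.card_le_two (a := i) (b := j)
    rw [Finset.card_compl]
    omega
  obtain ⟨k, hk, l, hl, hkl⟩ := Finset.one_lt_card.mp hcard
  simp only [Finset.mem_compl, Finset.mem_insert, Finset.mem_singleton, not_or] at hk hl
  exact ⟨k, l, Ne.symm hk.1, Ne.symm hl.1, Ne.symm hk.2, Ne.symm hl.2, hkl⟩

theorem stmt10_general (n d : ℕ) (hn : 6 ≤ n) (i j : Fin n) (hij : i ≠ j)
    (lam : MulAut (FreeGroup (Fin n)))
    (h1 : lam (FreeGroup.of i) = FreeGroup.of j * FreeGroup.of i)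
    (h2 : ∀ k : Fin n, k ≠ i → lam (FreeGroup.of k) = FreeGroup.of k)
    (Φ : MulAut (FreeGroup (Fin n)) →* Matrix.SpecialLinearGroup (Fin d) ℝ)
    (μ : ℂ)
    (hμ : μ ∈ spectrum ℂ
      (((Φ lam : Matrix (Fin d) (Fin d) ℝ)).map (fun x : ℝ => (x : ℂ)))) :
    ‖μ‖ = 1 := by
  obtain ⟨k, l, hik, hil, hjk, hjl, hkl⟩ :=
    Fintype.exists_two_ne_of_four_le_card (by rw [Fintype.card_fin]; omega) i j
  obtain rfl : lam = FreeGroup.nielsenLeft i j hij := FreeGroup.mulEquiv_ext fun r => by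
    by_cases hr : r = i
    · simp [hr, h1]
    · simp [hr, h2 r hr]
  let ρ := Matrix.SpecialLinearGroup.coeMonoidHom.comp
    ((Matrix.SpecialLinearGroup.map (algebraMap ℝ ℂ)).comp Φ)
  obtain ⟨m, hm, hμm⟩ := ρ.exists_pow_eq_one_of_mem_spectrum
    (FreeGroup.nielsenLeft_mem_commutator_centralizer hij hik hil hjk hjl hkl) hμ
  exact Complex.norm_eq_one_of_pow_eq_one hμm hm

/-- For `n ≥ 6` and `d ≥ 1`, if `λ = λ_{ij}` (`i ≠ j`) is a Nielsen
transformation of the free group `F_n`, then for every homomorphism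
`Φ : Aut(F_n) → SL(d, ℝ)`, every complex eigenvalue of the matrix `Φ(λ)` has
absolute value `1`. -/
theorem stmt10 (n d : ℕ) (hn : 6 ≤ n) (hd : 1 ≤ d) (i j : Fin n) (hij : i ≠ j)
    (lam : MulAut (FreeGroup (Fin n)))
    (h1 : lam (FreeGroup.of i) = FreeGroup.of j * FreeGroup.of i)
    (h2 : ∀ k : Fin n, k ≠ i → lam (FreeGroup.of k) = FreeGroup.of k)
    (Φ : MulAut (FreeGroup (Fin n)) →* Matrix.SpecialLinearGroup (Fin d) ℝ)
    (μ : ℂ)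
    (hμ : μ ∈ spectrum ℂ
      (((Φ lam : Matrix (Fin d) (Fin d) ℝ)).map (fun x : ℝ => (x : ℂ)))) :
    ‖μ‖ = 1 :=
  stmt10_general n d hn i j hij lam h1 h2 Φ μ hμ
end

section
/- Let u_1, u_2, v_1, v_2 be unit vectors in Euclidean 3-space ℝ^3 satisfying: (1) u_1 + u_2 = v_1 + v_2; (2) ⟨u_1, u_2⟩ = 0 and ⟨v_1, v_2⟩ = 0; and (3) ⟨u_1 − u_2, v_1 − v_2⟩ = 0. Let A be the additive subgroup (ℤ-submodule) of ℝ^3 generated by u_1, u_2, v_1, v_2. Then A is discrete (there exists ε > 0 such that every non-zero element of A has norm at least ε) and A spans ℝ^3 as a real vector space; in particular A is not contained in any plane. -/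
/-!
Put `s = u₁ + u₂ = v₁ + v₂`, `d = u₁ - u₂` and `e = v₁ - v₂`. Since `u₁, u₂` and `v₁, v₂` are
pairs of equal length, `s ⊥ d` and `s ⊥ e`, and `d ⊥ e` is assumed; so `s, d, e` is an orthogonal
basis of `ℝ³` built from the generators, which gives the spanning statement. Moreover `2u₁ = s + d`
and `2v₁ = s + e` show that every generator has integral inner products with `s, d, e`, hence so
does every element of `A`. A nonzero `x ∈ A` has a nonzero, thus at least unit, inner product with
one of `s, d, e`, all of norm `≤ 2`, and Cauchy–Schwarz gives `‖x‖ ≥ 1/2`.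
-/

open Submodule Set Module RealInnerProductSpace

section InnerProduct

variable {E : Type*} [NormedAddCommGroup E] [InnerProductSpace ℝ E]

theorem exists_int_inner_of_mem_closure {w : E} {S : Set E} (hS : ∀ a ∈ S, ∃ n : ℤ, ⟪w, a⟫ = n)
    {x : E} (hx : x ∈ AddSubgroup.closure S) : ∃ n : ℤ, ⟪w, x⟫ = n := by
  have hle : AddSubgroup.closure S ≤
      (Int.castAddHom ℝ).range.comap (innerₛₗ ℝ w).toAddMonoidHom :=
    (AddSubgroup.closure_le _).2 fun a ha ↦ by
      simpa [AddSubgroup.mem_zmultiples_iff, eq_comm] using hS a ha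
  simpa [AddSubgroup.mem_zmultiples_iff, eq_comm] using hle hx

theorem one_le_norm_mul_norm_of_inner_eq_intCast {w x : E} {n : ℤ} (h : ⟪w, x⟫ = n) (hn : n ≠ 0) :
    1 ≤ ‖w‖ * ‖x‖ :=
  calc (1 : ℝ) ≤ |(n : ℝ)| := by exact_mod_cast Int.one_le_abs hn
    _ = |⟪w, x⟫| := by rw [h]
    _ ≤ ‖w‖ * ‖x‖ := abs_real_inner_le_norm w x

theorem exists_inner_ne_zero_of_span_eq_top {ι : Type*} {w : ι → E} (hw : span ℝ (range w) = ⊤)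
    {x : E} (hx : x ≠ 0) : ∃ i, ⟪w i, x⟫ ≠ 0 := by
  by_contra! h
  have : innerₛₗ ℝ x = 0 := LinearMap.ext_on_range hw fun i ↦ by simpa [real_inner_comm] using h i
  exact hx (inner_self_eq_zero.1 (LinearMap.congr_fun this x))

theorem inv_le_norm_of_mem_closure {ι : Type*} {w : ι → E} (hw : span ℝ (range w) = ⊤) {C : ℝ}
    (hC : ∀ i, ‖w i‖ ≤ C) {S : Set E} (hS : ∀ i, ∀ a ∈ S, ∃ n : ℤ, ⟪w i, a⟫ = n) {x : E}
    (hx : x ∈ AddSubgroup.closure S) (hx₀ : x ≠ 0) : C⁻¹ ≤ ‖x‖ := by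
  obtain ⟨i, hi⟩ := exists_inner_ne_zero_of_span_eq_top hw hx₀
  obtain ⟨n, hn⟩ := exists_int_inner_of_mem_closure (hS i) hx
  have hone := one_le_norm_mul_norm_of_inner_eq_intCast hn (by rintro rfl; simp [hn] at hi)
  have hC₀ : 0 < C := (norm_pos_iff.2 fun h ↦ by norm_num [h] at hone).trans_le (hC i)
  rw [inv_le_iff_one_le_mul₀' hC₀]
  exact hone.trans (mul_le_mul_of_nonneg_right (hC i) (norm_nonneg x))

theorem inner_add_sub_of_orthonormal_pair {a b : E} (ha : ‖a‖ = 1) (hb : ‖b‖ = 1)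
    (hab : ⟪a, b⟫ = 0) :
    ⟪a + b, a⟫ = 1 ∧ ⟪a + b, b⟫ = 1 ∧ ⟪a - b, a⟫ = 1 ∧ ⟪a - b, b⟫ = -1 := by
  simp [inner_add_left, inner_sub_left, ha, hb, hab, real_inner_comm a b]

theorem inner_eq_zero_of_inner_add_of_inner_sub {w a b : E} (h₁ : ⟪w, a + b⟫ = 0)
    (h₂ : ⟪w, a - b⟫ = 0) : ⟪w, a⟫ = 0 ∧ ⟪w, b⟫ = 0 := by
  rw [inner_add_right] at h₁
  rw [inner_sub_right] at h₂
  constructor <;> linarith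

end InnerProduct

section Frame

variable {E : Type*} [NormedAddCommGroup E] {u₁ u₂ v₁ v₂ : E}

/-- Against this orthogonal frame the generators `u₁, u₂, v₁, v₂` have the integer coordinates
`(1, 1, 0), (1, -1, 0), (1, 0, 1), (1, 0, -1)`. -/
def frame (u₁ u₂ v₁ v₂ : E) : Fin 3 → E := ![u₁ + u₂, u₁ - u₂, v₁ - v₂]

theorem norm_frame_le_two (hu₁ : ‖u₁‖ = 1) (hu₂ : ‖u₂‖ = 1) (hv₁ : ‖v₁‖ = 1) (hv₂ : ‖v₂‖ = 1)
    (i : Fin 3) : ‖frame u₁ u₂ v₁ v₂ i‖ ≤ 2 := by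
  fin_cases i
  · exact (norm_add_le u₁ u₂).trans (by rw [hu₁, hu₂]; norm_num)
  · exact (norm_sub_le u₁ u₂).trans (by rw [hu₁, hu₂]; norm_num)
  · exact (norm_sub_le v₁ v₂).trans (by rw [hv₁, hv₂]; norm_num)

variable [InnerProductSpace ℝ E]

theorem range_frame_subset_span (u₁ u₂ v₁ v₂ : E) :
    range (frame u₁ u₂ v₁ v₂) ⊆ span ℝ {u₁, u₂, v₁, v₂} := by
  rintro _ ⟨i, rfl⟩
  fin_cases i
  exacts [add_mem (subset_span (by simp)) (subset_span (by simp)),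
    sub_mem (subset_span (by simp)) (subset_span (by simp)),
    sub_mem (subset_span (by simp)) (subset_span (by simp))]

theorem inner_sum_diff_eq_zero (hu₁ : ‖u₁‖ = 1) (hu₂ : ‖u₂‖ = 1) (hv₁ : ‖v₁‖ = 1)
    (hv₂ : ‖v₂‖ = 1) (hsum : u₁ + u₂ = v₁ + v₂) :
    ⟪u₁ + u₂, u₁ - u₂⟫ = 0 ∧ ⟪u₁ + u₂, v₁ - v₂⟫ = 0 := by
  rw [real_inner_add_sub_eq_zero_iff, hsum, real_inner_add_sub_eq_zero_iff, hu₁, hu₂, hv₁, hv₂]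
  exact ⟨rfl, rfl⟩

theorem frame_pairwise_inner_eq_zero (hu₁ : ‖u₁‖ = 1) (hu₂ : ‖u₂‖ = 1) (hv₁ : ‖v₁‖ = 1)
    (hv₂ : ‖v₂‖ = 1) (hsum : u₁ + u₂ = v₁ + v₂) (hdiff : ⟪u₁ - u₂, v₁ - v₂⟫ = 0) :
    Pairwise fun i j ↦ ⟪frame u₁ u₂ v₁ v₂ i, frame u₁ u₂ v₁ v₂ j⟫ = 0 := by
  obtain ⟨hsd, hse⟩ := inner_sum_diff_eq_zero hu₁ hu₂ hv₁ hv₂ hsum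
  intro i j hij
  fin_cases i <;> fin_cases j <;> simp_all [frame, real_inner_comm]

theorem exists_int_inner_frame (hu₁ : ‖u₁‖ = 1) (hu₂ : ‖u₂‖ = 1) (hv₁ : ‖v₁‖ = 1)
    (hv₂ : ‖v₂‖ = 1) (hsum : u₁ + u₂ = v₁ + v₂) (hu : ⟪u₁, u₂⟫ = 0) (hv : ⟪v₁, v₂⟫ = 0)
    (hdiff : ⟪u₁ - u₂, v₁ - v₂⟫ = 0) (i : Fin 3) :
    ∀ a ∈ ({u₁, u₂, v₁, v₂} : Set E), ∃ n : ℤ, ⟪frame u₁ u₂ v₁ v₂ i, a⟫ = n := by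
  obtain ⟨hsd, hse⟩ := inner_sum_diff_eq_zero hu₁ hu₂ hv₁ hv₂ hsum
  obtain ⟨hsu₁, hsu₂, hdu₁, hdu₂⟩ := inner_add_sub_of_orthonormal_pair hu₁ hu₂ hu
  obtain ⟨hsv₁, hsv₂, hev₁, hev₂⟩ := inner_add_sub_of_orthonormal_pair hv₁ hv₂ hv
  obtain ⟨hdv₁, hdv₂⟩ := inner_eq_zero_of_inner_add_of_inner_sub
    (hsum ▸ (real_inner_comm _ _).trans hsd) hdiff
  obtain ⟨heu₁, heu₂⟩ := inner_eq_zero_of_inner_add_of_inner_sub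
    ((real_inner_comm _ _).trans hse) ((real_inner_comm _ _).trans hdiff)
  rw [← hsum] at hsv₁ hsv₂
  simp only [Set.forall_mem_insert, Set.mem_singleton_iff, forall_eq]
  fin_cases i
  · exact ⟨⟨1, by simpa [frame]⟩, ⟨1, by simpa [frame]⟩, ⟨1, by simpa [frame]⟩,
      ⟨1, by simpa [frame]⟩⟩
  · exact ⟨⟨1, by simpa [frame]⟩, ⟨-1, by simpa [frame]⟩, ⟨0, by simpa [frame]⟩,
      ⟨0, by simpa [frame]⟩⟩
  · exact ⟨⟨0, by simpa [frame]⟩, ⟨0, by simpa [frame]⟩, ⟨1, by simpa [frame]⟩,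
      ⟨-1, by simpa [frame]⟩⟩

theorem frame_ne_zero (hu₁ : ‖u₁‖ = 1) (hu₂ : ‖u₂‖ = 1) (hv₁ : ‖v₁‖ = 1) (hv₂ : ‖v₂‖ = 1)
    (hu : ⟪u₁, u₂⟫ = 0) (hv : ⟪v₁, v₂⟫ = 0) (i : Fin 3) : frame u₁ u₂ v₁ v₂ i ≠ 0 := by
  obtain ⟨hsu₁, -, hdu₁, -⟩ := inner_add_sub_of_orthonormal_pair hu₁ hu₂ hu
  obtain ⟨-, -, hev₁, -⟩ := inner_add_sub_of_orthonormal_pair hv₁ hv₂ hv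
  fin_cases i <;> rintro h <;> simp_all [frame]

end Frame

/-- If `u₁, u₂, v₁, v₂` are unit vectors in Euclidean 3-space with
`u₁ + u₂ = v₁ + v₂`, `⟪u₁,u₂⟫ = ⟪v₁,v₂⟫ = 0` and `⟪u₁ - u₂, v₁ - v₂⟫ = 0`, then the
additive subgroup `A` they generate is discrete and spans `ℝ³`; in particular `A` is
not contained in any plane. -/
theorem stmt16 (u₁ u₂ v₁ v₂ : EuclideanSpace ℝ (Fin 3))
    (hu₁ : ‖u₁‖ = 1) (hu₂ : ‖u₂‖ = 1) (hv₁ : ‖v₁‖ = 1) (hv₂ : ‖v₂‖ = 1)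
    (hsum : u₁ + u₂ = v₁ + v₂)
    (hu : (inner ℝ u₁ u₂ : ℝ) = 0) (hv : (inner ℝ v₁ v₂ : ℝ) = 0)
    (hdiff : (inner ℝ (u₁ - u₂) (v₁ - v₂) : ℝ) = 0) :
    (∃ ε > (0 : ℝ), ∀ x ∈ AddSubgroup.closure {u₁, u₂, v₁, v₂}, x ≠ 0 → ε ≤ ‖x‖) ∧
    Submodule.span ℝ ({u₁, u₂, v₁, v₂} : Set (EuclideanSpace ℝ (Fin 3))) = ⊤ := by
  have hspan : span ℝ (range (frame u₁ u₂ v₁ v₂)) = ⊤ :=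
    (linearIndependent_of_ne_zero_of_inner_eq_zero (frame_ne_zero hu₁ hu₂ hv₁ hv₂ hu hv)
      (frame_pairwise_inner_eq_zero hu₁ hu₂ hv₁ hv₂ hsum hdiff)).span_eq_top_of_card_eq_finrank
      (by simp)
  refine ⟨⟨2⁻¹, by norm_num, fun x hx hx₀ ↦ ?_⟩, ?_⟩
  · exact inv_le_norm_of_mem_closure hspan (norm_frame_le_two hu₁ hu₂ hv₁ hv₂)
      (exists_int_inner_frame hu₁ hu₂ hv₁ hv₂ hsum hu hv hdiff) hx hx₀
  · exact eq_top_iff.2 (hspan.symm.le.trans (span_le.2 (range_frame_subset_span u₁ u₂ v₁ v₂)))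
end

section
/- Let u_1, u_2, v_1, v_2 be unit vectors in Euclidean 3-space ℝ^3 satisfying: (1) u_1 + u_2 = v_1 + v_2; (2) ⟨u_1, u_2⟩ = 0 and ⟨v_1, v_2⟩ = 0; and (3) ⟨u_1 − u_2, v_1 − v_2⟩ = 0. Then there exists a linear isometry e of ℝ^3 with e(u_1) = (1/√2)(1,1,0), e(u_2) = (1/√2)(1,−1,0), e(v_1) = (1/√2)(1,0,1), and e(v_2) = (1/√2)(1,0,−1). Consequently e maps the additive subgroup generated by u_1, u_2, v_1, v_2 onto the scaled face-centred cubic lattice { (1/√2)(a,b,c) : a, b, c ∈ ℤ, a + b + c even }. -/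
/-!
The hypotheses say exactly that `(u₁ + u₂)/√2`, `(u₁ - u₂)/√2`, `(v₁ - v₂)/√2` are orthonormal
(for the second pair use `u₁ + u₂ = v₁ + v₂`), so some isometry sends them to the standard basis.
Since `u₁, u₂ = ((u₁ + u₂) ± (u₁ - u₂))/2` and `v₁, v₂ = ((u₁ + u₂) ± (v₁ - v₂))/2`, it sends the
four vectors to the prescribed ones, and the lattice claim reduces to the fact that
`(1,1,0), (1,0,1), (1,0,-1)` generate the even-sum sublattice of `ℤ³`.
-/

open Module

theorem Orthonormal.exists_linearIsometryEquiv_euclideanSpace {𝕜 E : Type*} [RCLike 𝕜]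
    [NormedAddCommGroup E] [InnerProductSpace 𝕜 E] [FiniteDimensional 𝕜 E] {n : ℕ}
    {v : Fin n → E} (hv : Orthonormal 𝕜 v) (hn : finrank 𝕜 E = n) :
    ∃ e : E ≃ₗᵢ[𝕜] EuclideanSpace 𝕜 (Fin n), ∀ i, e (v i) = EuclideanSpace.single i 1 := by
  obtain ⟨b, hb⟩ := Orthonormal.exists_orthonormalBasis_extension_of_card_eq (s := Set.univ)
    (by simpa using hn) (hv.comp _ Subtype.val_injective)
  exact ⟨b.repr, fun i => by rw [← hb i (Set.mem_univ i), b.repr_self]⟩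

theorem orthonormal_vecCons_three {𝕜 E : Type*} [RCLike 𝕜] [NormedAddCommGroup E]
    [InnerProductSpace 𝕜 E] {a b c : E} (ha : ‖a‖ = 1) (hb : ‖b‖ = 1) (hc : ‖c‖ = 1)
    (hab : inner 𝕜 a b = 0) (hac : inner 𝕜 a c = 0) (hbc : inner 𝕜 b c = 0) :
    Orthonormal 𝕜 ![a, b, c] := by
  refine ⟨fun i => by fin_cases i <;> assumption, fun i j hij => ?_⟩
  fin_cases i <;> fin_cases j <;> simp_all [inner_eq_zero_symm]

section Module

variable {M : Type*} [AddCommGroup M] [Module ℝ M]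

theorem inv_sqrt_two_mul_self : (√2)⁻¹ * (√2)⁻¹ = (2 : ℝ)⁻¹ := by
  rw [← mul_inv, Real.mul_self_sqrt zero_le_two]

theorem inv_sqrt_two_smul_add_add_sub (x y : M) :
    (√2)⁻¹ • ((√2)⁻¹ • (x + y) + (√2)⁻¹ • (x - y)) = x := by
  rw [smul_add, smul_smul, smul_smul, inv_sqrt_two_mul_self]
  module

theorem inv_sqrt_two_smul_add_sub_sub (x y : M) :
    (√2)⁻¹ • ((√2)⁻¹ • (x + y) - (√2)⁻¹ • (x - y)) = y := by
  rw [smul_sub, smul_smul, smul_smul, inv_sqrt_two_mul_self]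
  module

end Module

section InnerProductSpace

variable {E : Type*} [NormedAddCommGroup E] [InnerProductSpace ℝ E]

theorem norm_inv_sqrt_two_smul_of_norm_mul_self_eq_two {x : E} (hx : ‖x‖ * ‖x‖ = 2) :
    ‖(√2)⁻¹ • x‖ = 1 := by
  rw [norm_smul, norm_inv, Real.norm_of_nonneg (Real.sqrt_nonneg 2),
    ← Real.sqrt_mul_self (norm_nonneg x), hx]
  exact inv_mul_cancel₀ (by positivity)

theorem norm_mul_self_add_eq_two {x y : E} (hx : ‖x‖ = 1) (hy : ‖y‖ = 1)
    (h : inner ℝ x y = 0) : ‖x + y‖ * ‖x + y‖ = 2 := by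
  rw [norm_add_sq_eq_norm_sq_add_norm_sq_real h, hx, hy]; norm_num

theorem norm_mul_self_sub_eq_two {x y : E} (hx : ‖x‖ = 1) (hy : ‖y‖ = 1)
    (h : inner ℝ x y = 0) : ‖x - y‖ * ‖x - y‖ = 2 := by
  rw [norm_sub_sq_eq_norm_sq_add_norm_sq_real h, hx, hy]; norm_num

theorem inner_smul_smul_eq_zero {x y : E} (h : inner ℝ x y = 0) (r t : ℝ) :
    inner ℝ (r • x) (t • y) = 0 := by
  rw [real_inner_smul_left, real_inner_smul_right, h, mul_zero, mul_zero]

theorem orthonormal_inv_sqrt_two_smul_add_sub_sub {u₁ u₂ v₁ v₂ : E}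
    (hu₁ : ‖u₁‖ = 1) (hu₂ : ‖u₂‖ = 1) (hv₁ : ‖v₁‖ = 1) (hv₂ : ‖v₂‖ = 1)
    (hsum : u₁ + u₂ = v₁ + v₂) (hu : inner ℝ u₁ u₂ = 0) (hv : inner ℝ v₁ v₂ = 0)
    (hdiff : inner ℝ (u₁ - u₂) (v₁ - v₂) = 0) :
    Orthonormal ℝ ![(√2)⁻¹ • (u₁ + u₂), (√2)⁻¹ • (u₁ - u₂), (√2)⁻¹ • (v₁ - v₂)] := by
  have hu_add_sub : inner ℝ (u₁ + u₂) (u₁ - u₂) = 0 :=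
    (real_inner_add_sub_eq_zero_iff u₁ u₂).mpr (hu₁.trans hu₂.symm)
  have huv_add_sub : inner ℝ (u₁ + u₂) (v₁ - v₂) = 0 := by
    rw [hsum]; exact (real_inner_add_sub_eq_zero_iff v₁ v₂).mpr (hv₁.trans hv₂.symm)
  exact orthonormal_vecCons_three
    (norm_inv_sqrt_two_smul_of_norm_mul_self_eq_two (norm_mul_self_add_eq_two hu₁ hu₂ hu))
    (norm_inv_sqrt_two_smul_of_norm_mul_self_eq_two (norm_mul_self_sub_eq_two hu₁ hu₂ hu))
    (norm_inv_sqrt_two_smul_of_norm_mul_self_eq_two (norm_mul_self_sub_eq_two hv₁ hv₂ hv))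
    (inner_smul_smul_eq_zero hu_add_sub _ _) (inner_smul_smul_eq_zero huv_add_sub _ _)
    (inner_smul_smul_eq_zero hdiff _ _)

end InnerProductSpace

def fccLattice : AddSubgroup (Fin 3 → ℤ) where
  carrier := {x | Even (x 0 + x 1 + x 2)}
  add_mem' {x y} hx hy := by
    simp only [Set.mem_ofPred_eq, Pi.add_apply, Int.even_iff] at *; omega
  zero_mem' := by simp
  neg_mem' {x} hx := by
    simp only [Set.mem_ofPred_eq, Pi.neg_apply, Int.even_iff] at *; omega

theorem mem_fccLattice {x : Fin 3 → ℤ} : x ∈ fccLattice ↔ Even (x 0 + x 1 + x 2) := Iff.rfl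

theorem closure_fcc_generators :
    AddSubgroup.closure {![1, 1, 0], ![1, -1, 0], ![1, 0, 1], ![1, 0, -1]} = fccLattice := by
  apply le_antisymm
  · rw [AddSubgroup.closure_le]
    rintro x (rfl | rfl | rfl | rfl) <;> exact mem_fccLattice.mpr (by decide)
  · rintro x ⟨r, hr⟩
    have hx : x = x 1 • ![1, 1, 0] + (r - x 1) • ![1, 0, 1] + (r - x 1 - x 2) • ![1, 0, -1] := by
      ext i; fin_cases i <;> simp; omega
    rw [hx]
    refine add_mem (add_mem ?_ ?_) ?_ <;>
      exact zsmul_mem (AddSubgroup.subset_closure (by simp)) _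

noncomputable def fccEmbedding : (Fin 3 → ℤ) →+ EuclideanSpace ℝ (Fin 3) :=
  AddMonoidHom.mk' (fun x => (√2)⁻¹ • (WithLp.equiv 2 (Fin 3 → ℝ)).symm (fun i => (x i : ℝ)))
    (fun x y => by ext i; simp [mul_add])

theorem fccEmbedding_vecCons (a b c : ℤ) :
    fccEmbedding ![a, b, c] = (√2)⁻¹ • (WithLp.equiv 2 (Fin 3 → ℝ)).symm ![(a : ℝ), b, c] := by
  ext i; fin_cases i <;> simp [fccEmbedding]

theorem image_fccEmbedding_fccLattice :
    fccEmbedding '' fccLattice = {x | ∃ a b c : ℤ, Even (a + b + c) ∧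
      x = (√2)⁻¹ • (WithLp.equiv 2 (Fin 3 → ℝ)).symm ![(a : ℝ), (b : ℝ), (c : ℝ)]} := by
  ext x
  constructor
  · rintro ⟨y, hy, rfl⟩
    refine ⟨y 0, y 1, y 2, hy, ?_⟩
    rw [← fccEmbedding_vecCons]
    congr 1
    ext i; fin_cases i <;> rfl
  · rintro ⟨a, b, c, h, rfl⟩
    exact ⟨![a, b, c], h, fccEmbedding_vecCons a b c⟩

theorem closure_scaled_fcc_generators :
    (AddSubgroup.closure {(√2)⁻¹ • (WithLp.equiv 2 (Fin 3 → ℝ)).symm ![1, 1, 0],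
        (√2)⁻¹ • (WithLp.equiv 2 (Fin 3 → ℝ)).symm ![1, -1, 0],
        (√2)⁻¹ • (WithLp.equiv 2 (Fin 3 → ℝ)).symm ![1, 0, 1],
        (√2)⁻¹ • (WithLp.equiv 2 (Fin 3 → ℝ)).symm ![1, 0, -1]} : Set (EuclideanSpace ℝ (Fin 3)))
      = {x | ∃ a b c : ℤ, Even (a + b + c) ∧
          x = (√2)⁻¹ • (WithLp.equiv 2 (Fin 3 → ℝ)).symm ![(a : ℝ), (b : ℝ), (c : ℝ)]} := by
  have hgen : {(√2)⁻¹ • (WithLp.equiv 2 (Fin 3 → ℝ)).symm ![1, 1, 0],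
        (√2)⁻¹ • (WithLp.equiv 2 (Fin 3 → ℝ)).symm ![1, -1, 0],
        (√2)⁻¹ • (WithLp.equiv 2 (Fin 3 → ℝ)).symm ![1, 0, 1],
        (√2)⁻¹ • (WithLp.equiv 2 (Fin 3 → ℝ)).symm ![(1 : ℝ), 0, -1]}
      = fccEmbedding '' {![1, 1, 0], ![1, -1, 0], ![1, 0, 1], ![1, 0, -1]} := by
    simp [Set.image_insert_eq, fccEmbedding_vecCons]
  rw [hgen, ← AddMonoidHom.map_closure, closure_fcc_generators, AddSubgroup.coe_map,
    image_fccEmbedding_fccLattice]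

/-- If `u₁, u₂, v₁, v₂` are unit vectors in Euclidean 3-space with
`u₁ + u₂ = v₁ + v₂`, `⟪u₁,u₂⟫ = ⟪v₁,v₂⟫ = 0` and `⟪u₁ - u₂, v₁ - v₂⟫ = 0`, then some
linear isometry `e` of `ℝ³` carries them to `(1/√2)(1,1,0)`, `(1/√2)(1,-1,0)`,
`(1/√2)(1,0,1)`, `(1/√2)(1,0,-1)` respectively; consequently `e` maps the additive
subgroup they generate onto the scaled face-centred cubic lattice
`{(1/√2)(a,b,c) : a,b,c ∈ ℤ, a+b+c even}`. -/
theorem stmt17 (u₁ u₂ v₁ v₂ : EuclideanSpace ℝ (Fin 3))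
    (hu₁ : ‖u₁‖ = 1) (hu₂ : ‖u₂‖ = 1) (hv₁ : ‖v₁‖ = 1) (hv₂ : ‖v₂‖ = 1)
    (hsum : u₁ + u₂ = v₁ + v₂)
    (hu : (inner ℝ u₁ u₂ : ℝ) = 0) (hv : (inner ℝ v₁ v₂ : ℝ) = 0)
    (hdiff : (inner ℝ (u₁ - u₂) (v₁ - v₂) : ℝ) = 0) :
    ∃ e : EuclideanSpace ℝ (Fin 3) ≃ₗᵢ[ℝ] EuclideanSpace ℝ (Fin 3),
      e u₁ = (Real.sqrt 2)⁻¹ • (WithLp.equiv 2 (Fin 3 → ℝ)).symm ![1, 1, 0] ∧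
      e u₂ = (Real.sqrt 2)⁻¹ • (WithLp.equiv 2 (Fin 3 → ℝ)).symm ![1, -1, 0] ∧
      e v₁ = (Real.sqrt 2)⁻¹ • (WithLp.equiv 2 (Fin 3 → ℝ)).symm ![1, 0, 1] ∧
      e v₂ = (Real.sqrt 2)⁻¹ • (WithLp.equiv 2 (Fin 3 → ℝ)).symm ![1, 0, -1] ∧
      e '' (AddSubgroup.closure {u₁, u₂, v₁, v₂} : Set (EuclideanSpace ℝ (Fin 3)))
        = {x : EuclideanSpace ℝ (Fin 3) | ∃ a b c : ℤ, Even (a + b + c) ∧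
            x = (Real.sqrt 2)⁻¹ •
              (WithLp.equiv 2 (Fin 3 → ℝ)).symm ![(a : ℝ), (b : ℝ), (c : ℝ)]} := by
  obtain ⟨e, he⟩ := (orthonormal_inv_sqrt_two_smul_add_sub_sub hu₁ hu₂ hv₁ hv₂ hsum hu hv
    hdiff).exists_linearIsometryEquiv_euclideanSpace finrank_euclideanSpace_fin
  have h0 : e ((√2)⁻¹ • (u₁ + u₂)) = EuclideanSpace.single 0 1 := he 0
  have h1 : e ((√2)⁻¹ • (u₁ - u₂)) = EuclideanSpace.single 1 1 := he 1
  have h2 : e ((√2)⁻¹ • (v₁ - v₂)) = EuclideanSpace.single 2 1 := he 2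
  have heu₁ : e u₁ = (√2)⁻¹ • (WithLp.equiv 2 (Fin 3 → ℝ)).symm ![1, 1, 0] := by
    rw [← inv_sqrt_two_smul_add_add_sub u₁ u₂, map_smul, map_add, h0, h1]
    congr 1; ext i; fin_cases i <;> simp
  have heu₂ : e u₂ = (√2)⁻¹ • (WithLp.equiv 2 (Fin 3 → ℝ)).symm ![1, -1, 0] := by
    rw [← inv_sqrt_two_smul_add_sub_sub u₁ u₂, map_smul, map_sub, h0, h1]
    congr 1; ext i; fin_cases i <;> simp
  have hev₁ : e v₁ = (√2)⁻¹ • (WithLp.equiv 2 (Fin 3 → ℝ)).symm ![1, 0, 1] := by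
    rw [← inv_sqrt_two_smul_add_add_sub v₁ v₂, ← hsum, map_smul, map_add, h0, h2]
    congr 1; ext i; fin_cases i <;> simp
  have hev₂ : e v₂ = (√2)⁻¹ • (WithLp.equiv 2 (Fin 3 → ℝ)).symm ![1, 0, -1] := by
    rw [← inv_sqrt_two_smul_add_sub_sub v₁ v₂, ← hsum, map_smul, map_sub, h0, h2]
    congr 1; ext i; fin_cases i <;> simp
  refine ⟨e, heu₁, heu₂, hev₁, hev₂, ?_⟩
  rw [← AddMonoidHom.coe_coe e, ← AddSubgroup.coe_map, AddMonoidHom.map_closure]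
  simp only [Set.image_insert_eq, Set.image_singleton, AddMonoidHom.coe_coe, heu₁, heu₂, hev₁,
    hev₂]
  exact closure_scaled_fcc_generators
end
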